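/- arXiv:2502.10566 — 11 statements merged into one kernel-verified Lean document; each statement's English description precedes it below -/
import Mathlib

section
/- Let F be an algebraically closed field and I a non-empty index set with |I| < |F| (cardinalities). Then every maximal ideal m of the polynomial ring A = F[t_i | i ∈ I] is of the form m = m_x for some point x ∈ F^I, i.e. m equals the ideal of all polynomials vanishing at x. -/
universe u

/-- **Kaplansky's Nullstellensatz in infinite dimensions.**
If `F` is an algebraically closed field, `I` a non-empty index set with `|I| < |F|`,
then every maximal ideal of `F[t_i | i ∈ I]` is the vanishing ideal of a point `x ∈ F^I`,
i.e. the kernel of the evaluation homomorphism at `x`. -/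
theorem stmt_0 {F : Type u} {I : Type u} [Field F] [IsAlgClosed F] [Nonempty I]
    (hcard : Cardinal.mk I < Cardinal.mk F)
    (m : Ideal (MvPolynomial I F)) (hm : m.IsMaximal) :
    ∃ x : I → F, m = RingHom.ker (MvPolynomial.eval x) := by
  classical
  letI := hm
  letI : Field (MvPolynomial I F ⧸ m) := Ideal.Quotient.field m
  have : True := trivial
  have hϕ : algebraMap F (MvPolynomial I F ⧸ m) = (Ideal.Quotient.mk m).comp MvPolynomial.C := rfl
  -- algebraicity of (MvPolynomial I F ⧸ m) over F
  have halg : Algebra.IsAlgebraic F (MvPolynomial I F ⧸ m) := by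
    cases finite_or_infinite I with
    | inl hfin =>
      have hint : ((Ideal.Quotient.mk m).comp MvPolynomial.C).IsIntegral :=
        MvPolynomial.comp_C_integral_of_surjective_of_isJacobsonRing _
          Ideal.Quotient.mk_surjective
      refine ⟨fun x => ?_⟩
      have : IsIntegral F x := by
        have := hint x
        rwa [← hϕ] at this
      exact this.isAlgebraic
    | inr hinf =>
      have hrank : Module.rank F (MvPolynomial I F ⧸ m) < Cardinal.mk F := by
        have h1 : Module.rank F (MvPolynomial I F ⧸ m) ≤ Module.rank F (MvPolynomial I F) :=
          LinearMap.rank_le_of_surjective (Ideal.Quotient.mkₐ F m).toLinearMap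
            Ideal.Quotient.mk_surjective
        rw [MvPolynomial.rank_eq, Cardinal.mk_finsupp_nat,
          max_eq_left (Cardinal.infinite_iff.mp hinf)] at h1
        exact lt_of_le_of_lt h1 hcard
      refine ⟨fun x => ?_⟩
      by_contra h
      have hli := Transcendental.linearIndependent_sub_inv (F := F) h
      have := hli.cardinal_le_rank
      exact absurd (this.trans_lt hrank) (lt_irrefl _)
  -- surjectivity
  have hsurj : Function.Surjective (algebraMap F (MvPolynomial I F ⧸ m)) :=
    haveI : Algebra.IsIntegral F (MvPolynomial I F ⧸ m) := halg.isIntegral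
    IsAlgClosed.algebraMap_bijective_of_isIntegral.2
  set x : I → F := fun i => Function.surjInv hsurj (Ideal.Quotient.mk m (MvPolynomial.X i))
    with hxdef
  have hx : ∀ i, algebraMap F (MvPolynomial I F ⧸ m) (x i) = Ideal.Quotient.mk m (MvPolynomial.X i) := fun i =>
    Function.surjInv_eq hsurj _
  refine ⟨x, ?_⟩
  have hker : ∀ p ∈ m, MvPolynomial.eval x p = 0 := by
    intro p hp
    have hinj : Function.Injective (algebraMap F (MvPolynomial I F ⧸ m)) := (algebraMap F (MvPolynomial I F ⧸ m)).injective
    apply hinj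
    rw [map_zero]
    have heq : (MvPolynomial.eval₂Hom ((Ideal.Quotient.mk m).comp MvPolynomial.C)
        (fun i => Ideal.Quotient.mk m (MvPolynomial.X i))) = Ideal.Quotient.mk m :=
      MvPolynomial.ringHom_ext' (by ext a; simp) (fun i => by simp)
    calc algebraMap F (MvPolynomial I F ⧸ m) (MvPolynomial.eval x p)
        = MvPolynomial.eval₂ ((algebraMap F (MvPolynomial I F ⧸ m)).comp (RingHom.id F))
            ((algebraMap F (MvPolynomial I F ⧸ m)) ∘ x) p := by
          rw [← MvPolynomial.eval₂_id, MvPolynomial.eval₂_comp_left]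
      _ = MvPolynomial.eval₂ ((Ideal.Quotient.mk m).comp MvPolynomial.C)
            (fun i => Ideal.Quotient.mk m (MvPolynomial.X i)) p := by
          rw [RingHom.comp_id, hϕ]
          congr 1
          funext i; rw [← hϕ]; exact hx i
      _ = Ideal.Quotient.mk m p := by rw [← MvPolynomial.coe_eval₂Hom, heq]
      _ = 0 := Ideal.Quotient.eq_zero_iff_mem.mpr hp
  refine hm.eq_of_le ?_ hker
  intro htop
  have : (1 : MvPolynomial I F) ∈ RingHom.ker (MvPolynomial.eval x) := htop ▸ Submodule.mem_top
  simp [RingHom.mem_ker] at this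
end

section
/- Let F be an algebraically closed field and I a non-empty index set with |I| < |F|. Then for every ideal a of the polynomial ring A = F[t_i | i ∈ I] one has I(V(a)) = √a, where √a is the radical of a (the strong Nullstellensatz in infinite dimensions). -/
set_option maxHeartbeats 1000000

universe u

open Cardinal MvPolynomial

theorem aux_maximal_point {F : Type u} {J : Type u} [Field F] [IsAlgClosed F] [Infinite J]
    (hcard : #J < #F) (m : Ideal (MvPolynomial J F)) (hm : m.IsMaximal) :
    ∃ x : J → F, ∀ p ∈ m, MvPolynomial.eval x p = 0 := by
  haveI := hm
  letI : Field (MvPolynomial J F ⧸ m) := Ideal.Quotient.field m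
  haveI : Algebra.IsAlgebraic F (MvPolynomial J F ⧸ m) := by
    constructor
    intro z
    by_contra hz
    have hz : Transcendental F z := hz
    have h1 : #F ≤ Module.rank F (MvPolynomial J F ⧸ m) :=
      hz.linearIndependent_sub_inv.cardinal_le_rank
    have h2 : Module.rank F (MvPolynomial J F ⧸ m) ≤ Module.rank F (MvPolynomial J F) :=
      LinearMap.rank_le_of_surjective (Ideal.Quotient.mkₐ F m).toLinearMap
        (Ideal.Quotient.mkₐ_surjective F m)
    rw [MvPolynomial.rank_eq, Cardinal.mk_finsupp_nat, max_eq_left (Cardinal.aleph0_le_mk J)] at h2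
    exact absurd (h1.trans h2) (not_le.mpr hcard)
  have hsurj : Function.Surjective (algebraMap F (MvPolynomial J F ⧸ m)) := by
    set_option synthInstance.maxHeartbeats 1000000 in
    exact IsAlgClosed.algebraMap_bijective_of_isIntegral.2
  obtain ⟨φ, hφ⟩ := hsurj.hasRightInverse
  refine ⟨fun s => φ (Ideal.Quotient.mk m (X s)), fun p hp => ?_⟩
  set x : J → F := fun s => φ (Ideal.Quotient.mk m (X s)) with hxdef
  have hx : ∀ s, algebraMap F (MvPolynomial J F ⧸ m) (x s) = Ideal.Quotient.mk m (X s) :=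
    fun s => hφ _
  have hhom : (Ideal.Quotient.mk m : MvPolynomial J F →+* MvPolynomial J F ⧸ m)
      = (algebraMap F (MvPolynomial J F ⧸ m)).comp (MvPolynomial.eval x) := by
    apply MvPolynomial.ringHom_ext
    · intro c
      rw [RingHom.comp_apply, eval_C,
        IsScalarTower.algebraMap_eq F (MvPolynomial J F) (MvPolynomial J F ⧸ m),
        RingHom.comp_apply, MvPolynomial.algebraMap_eq]
      rfl
    · intro s
      rw [RingHom.comp_apply, eval_X, hx s]
  have h0 : algebraMap F (MvPolynomial J F ⧸ m) (MvPolynomial.eval x p) = 0 := by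
    rw [← RingHom.comp_apply, ← hhom, Ideal.Quotient.eq_zero_iff_mem]
    exact hp
  exact (algebraMap F (MvPolynomial J F ⧸ m)).injective (by rw [h0, map_zero])

/-- **The strong Nullstellensatz in infinite dimensions.**
If `F` is an algebraically closed field and `I` a non-empty index set with `|I| < |F|`,
then for every ideal `a` of `F[t_i | i ∈ I]` one has `I(V(a)) = √a`. -/
theorem stmt_1 {F : Type u} {I : Type u} [Field F] [IsAlgClosed F] [Nonempty I]
    (hcard : Cardinal.mk I < Cardinal.mk F)
    (a : Ideal (MvPolynomial I F)) :
    MvPolynomial.vanishingIdeal F (MvPolynomial.zeroLocus F a) = a.radical := by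
  rcases finite_or_infinite I with hI | hI
  · exact MvPolynomial.vanishingIdeal_zeroLocus_eq_radical a
  refine le_antisymm ?_ (MvPolynomial.radical_le_vanishingIdeal_zeroLocus a)
  intro p hp
  classical
  -- Rabinowitsch trick
  set S : Set (MvPolynomial (Option I) F) :=
    (rename Option.some '' (a : Set (MvPolynomial I F))) ∪ {1 - X none * rename Option.some p}
    with hS
  set b : Ideal (MvPolynomial (Option I) F) := Ideal.span S with hb
  have hbtop : b = ⊤ := by
    by_contra hbne
    obtain ⟨m, hm, hbm⟩ := Ideal.exists_le_maximal b hbne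
    have hcard' : #(Option I) < #F := by
      rw [Cardinal.mk_option, Cardinal.add_one_eq (Cardinal.aleph0_le_mk I)]
      exact hcard
    obtain ⟨y, hy⟩ := aux_maximal_point hcard' m hm
    have hxa : (fun i => y (some i)) ∈ MvPolynomial.zeroLocus F a := by
      intro q hq
      have := hy _ (hbm (Ideal.subset_span (Or.inl ⟨q, hq, rfl⟩)))
      rwa [eval_rename] at this
    have hpx : MvPolynomial.eval (fun i => y (some i)) p = 0 := hp _ hxa
    have h1 : MvPolynomial.eval y (1 - X none * rename Option.some p) = 0 :=
      hy _ (hbm (Ideal.subset_span (Or.inr rfl)))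
    rw [map_sub, map_one, map_mul, eval_X, eval_rename] at h1
    rw [show (y ∘ Option.some) = (fun i => y (some i)) from rfl, hpx, mul_zero, sub_zero] at h1
    exact one_ne_zero h1
  -- localize away from p
  set L := Localization.Away p with hL
  set ψ : MvPolynomial (Option I) F →+* L :=
    eval₂Hom ((algebraMap (MvPolynomial I F) L).comp (C : F →+* MvPolynomial I F))
      (fun o => Option.elim o (IsLocalization.Away.invSelf (S := L) p)
        (fun i => algebraMap (MvPolynomial I F) L (X i))) with hψ
  have hψrename : ∀ q : MvPolynomial I F,
      ψ (rename Option.some q) = algebraMap (MvPolynomial I F) L q := by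
    intro q
    have : ψ ((rename Option.some) q)
        = eval₂ ((algebraMap (MvPolynomial I F) L).comp (C : F →+* MvPolynomial I F))
          (fun i => algebraMap (MvPolynomial I F) L (X i)) q := by
      rw [hψ, coe_eval₂Hom, eval₂_rename]
      rfl
    rw [this]
    have hext : (eval₂Hom ((algebraMap (MvPolynomial I F) L).comp (C : F →+* MvPolynomial I F))
        (fun i : I => algebraMap (MvPolynomial I F) L (X i)))
        = algebraMap (MvPolynomial I F) L := by
      apply MvPolynomial.ringHom_ext
      · intro c
        simp
      · intro s
        simp
    exact RingHom.congr_fun hext q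
  have hone : (1 : L) ∈ a.map (algebraMap (MvPolynomial I F) L) := by
    have h1b : (1 : MvPolynomial (Option I) F) ∈ b := hbtop ▸ Submodule.mem_top
    have hmem : ψ 1 ∈ b.map ψ := Ideal.mem_map_of_mem ψ h1b
    rw [hb, Ideal.map_span] at hmem
    rw [map_one] at hmem
    refine Ideal.span_le.mpr ?_ hmem
    rintro _ ⟨w, hw, rfl⟩
    rcases hw with ⟨q, hq, rfl⟩ | hw
    · rw [hψrename]
      exact Ideal.mem_map_of_mem _ hq
    · rw [Set.mem_singleton_iff] at hw
      subst hw
      have : ψ (1 - X none * rename Option.some p) = 0 := by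
        rw [map_sub, map_one, map_mul, hψrename]
        have hXnone : ψ (X none) = IsLocalization.Away.invSelf (S := L) p := by
          rw [hψ]
          simp
        rw [hXnone, mul_comm, IsLocalization.Away.mul_invSelf, sub_self]
      rw [this]
      exact Ideal.zero_mem _
  rw [Ideal.radical_eq_sInf]
  refine Ideal.mem_sInf.mpr ?_
  rintro q ⟨hle, hq⟩
  by_contra hpq
  have hdisj : Disjoint ((Submonoid.powers p : Submonoid (MvPolynomial I F)) : Set (MvPolynomial I F)) (q : Set (MvPolynomial I F)) := by
    rw [Set.disjoint_left]
    rintro _ ⟨n, rfl⟩ hxq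
    exact hpq (hq.mem_of_pow_mem n hxq)
  have hprime := IsLocalization.isPrime_of_isPrime_disjoint (Submonoid.powers p) L q hq hdisj
  exact hprime.ne_top ((Ideal.eq_top_iff_one _).mpr (Ideal.map_mono hle hone))
end

section
/- Let F be a non-zero commutative ring and I a non-empty index set, and set A = F[t_i | i ∈ I]. If every maximal ideal m of A is of the form m = m_x for some x ∈ F^I (the vanishing ideal of the point x), then F is an algebraically closed field and |I| < |F|. -/
universe u

/-- If `F` is a non-zero commutative ring, `I` a non-empty index set, and every maximal
ideal of `A = F[t_i | i ∈ I]` is the kernel of an evaluation homomorphism at a point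
`x ∈ F^I`, then `F` is an algebraically closed field (every non-constant polynomial in
one variable over `F` has a root) and `|I| < |F|`. -/
theorem stmt_2 {F : Type u} {I : Type u} [CommRing F] [Nontrivial F] [Nonempty I]
    (h : ∀ m : Ideal (MvPolynomial I F), m.IsMaximal →
      ∃ x : I → F, m = RingHom.ker (MvPolynomial.eval x)) :
    IsField F ∧ (∀ p : Polynomial F, 0 < p.degree → ∃ x : F, p.eval x = 0) ∧
      Cardinal.mk I < Cardinal.mk F := by
  classical
  -- Step 1: F is a field
  have hF : IsField F := by
    refine ⟨exists_pair_ne F, mul_comm, ?_⟩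
    intro a ha
    by_cases htop : Ideal.span {(MvPolynomial.C a : MvPolynomial I F)} = ⊤
    · have h1 : (1 : MvPolynomial I F) ∈ Ideal.span {(MvPolynomial.C a : MvPolynomial I F)} :=
        htop ▸ Submodule.mem_top
      rw [Ideal.mem_span_singleton] at h1
      obtain ⟨c, hc⟩ := h1
      refine ⟨MvPolynomial.eval (fun _ : I => (0 : F)) c, ?_⟩
      have := congrArg (MvPolynomial.eval (fun _ : I => (0 : F))) hc
      simpa using this.symm
    · obtain ⟨M, hM, hle⟩ := Ideal.exists_le_maximal _ htop
      obtain ⟨x, hx⟩ := h M hM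
      have hmem : (MvPolynomial.C a : MvPolynomial I F) ∈ M :=
        hle (Ideal.subset_span rfl)
      rw [hx, RingHom.mem_ker] at hmem
      simp at hmem
      exact absurd hmem ha
  letI : Field F := hF.toField
  -- Step 2: every positive-degree polynomial has a root
  have hroot : ∀ p : Polynomial F, 0 < p.degree → ∃ x : F, p.eval x = 0 := by
    intro p hp
    obtain ⟨i₀⟩ := ‹Nonempty I›
    set q : MvPolynomial I F :=
      Polynomial.eval₂ MvPolynomial.C (MvPolynomial.X i₀) p with hq
    have hqu : ¬ IsUnit q := by
      intro hu
      have hup : IsUnit p := by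
        have := hu.map (MvPolynomial.eval₂Hom (Polynomial.C : F →+* Polynomial F)
          (fun _ : I => (Polynomial.X : Polynomial F)))
        rwa [hq, Polynomial.hom_eval₂, MvPolynomial.eval₂Hom_comp_C,
          MvPolynomial.eval₂Hom_X', Polynomial.eval₂_C_X] at this
      have hd := Polynomial.degree_eq_zero_of_isUnit hup
      rw [hd] at hp
      exact lt_irrefl _ hp
    have hspan : Ideal.span {q} ≠ ⊤ := by
      rw [Ne, Ideal.span_singleton_eq_top]; exact hqu
    obtain ⟨M, hM, hle⟩ := Ideal.exists_le_maximal _ hspan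
    obtain ⟨x, hx⟩ := h M hM
    have hq0 : MvPolynomial.eval x q = 0 := by
      have : q ∈ M := hle (Ideal.subset_span rfl)
      rwa [hx, RingHom.mem_ker] at this
    refine ⟨x i₀, ?_⟩
    rw [hq, Polynomial.hom_eval₂] at hq0
    have hcomp : (MvPolynomial.eval x).comp (MvPolynomial.C : F →+* MvPolynomial I F)
        = RingHom.id F := by
      ext a; simp
    rw [hcomp] at hq0
    simpa using hq0
  refine ⟨hF, hroot, ?_⟩
  -- Step 3: |I| < |F|
  haveI : IsAlgClosed F := by
    apply IsAlgClosed.of_exists_root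
    intro p _ hirr
    exact hroot p (Polynomial.degree_pos_of_irreducible hirr)
  haveI : Infinite F := inferInstance
  by_contra hlt
  have hleF : Cardinal.mk F ≤ Cardinal.mk I := le_of_not_gt hlt
  have hle2 : Cardinal.mk (Option F) ≤ Cardinal.mk I := by
    rw [Cardinal.mk_option, Cardinal.add_one_eq (Cardinal.aleph0_le_mk F)]
    exact hleF
  obtain ⟨ψ⟩ := Cardinal.le_def _ _ |>.mp hle2
  set g : F → MvPolynomial I F := fun a =>
    MvPolynomial.X (ψ (some a)) * (MvPolynomial.X (ψ none) - MvPolynomial.C a) - 1 with hg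
  have hS : Ideal.span (Set.range g) ≠ ⊤ := by
    intro htop
    have h1 : (1 : MvPolynomial I F) ∈ Ideal.span (Set.range g) := htop ▸ Submodule.mem_top
    obtain ⟨T, hTsub, hT⟩ := Submodule.mem_span_finite_of_mem_span h1
    set A : Finset F := T.attach.image (fun f => Classical.choose (hTsub f.2)) with hA
    obtain ⟨b, hb⟩ := Infinite.exists_notMem_finset A
    set v : Option F → F := fun o => o.elim b (fun a => (b - a)⁻¹) with hv
    set x : I → F := Function.extend ψ v 0 with hxdef
    have hxψ : ∀ o, x (ψ o) = v o := fun o => ψ.injective.extend_apply v 0 o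
    have hker : ∀ f ∈ T, MvPolynomial.eval x f = 0 := by
      intro f hf
      have hga := Classical.choose_spec (hTsub hf)
      set a := Classical.choose (hTsub hf) with ha
      have haA : a ∈ A := Finset.mem_image.mpr ⟨⟨f, hf⟩, Finset.mem_attach _ _, rfl⟩
      have hba : b - a ≠ 0 := sub_ne_zero.mpr (fun e => hb (e ▸ haA))
      rw [← hga]
      simp only [hg, map_sub, map_mul, map_one, MvPolynomial.eval_X, MvPolynomial.eval_C]
      rw [hxψ (some a), hxψ none]
      simp only [hv, Option.elim]
      rw [inv_mul_cancel₀ hba]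
      ring
    have hle' : Ideal.span (↑T : Set (MvPolynomial I F)) ≤
        RingHom.ker (MvPolynomial.eval x) := Ideal.span_le.mpr (fun f hf => hker f hf)
    have : MvPolynomial.eval x (1 : MvPolynomial I F) = 0 := hle' hT
    simp only [map_one] at this; exact one_ne_zero this
  obtain ⟨M, hM, hleM⟩ := Ideal.exists_le_maximal _ hS
  obtain ⟨x, hx⟩ := h M hM
  have hall : ∀ a : F, MvPolynomial.eval x (g a) = 0 := by
    intro a
    have : g a ∈ M := hleM (Ideal.subset_span ⟨a, rfl⟩)
    rwa [hx, RingHom.mem_ker] at this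
  have := hall (x (ψ none))
  simp [hg, sub_self] at this
end

section
/- Let F be a non-zero commutative ring, I a non-empty index set, and A = F[t_i | i ∈ I]. If for every proper ideal a of A there exists an F-algebra homomorphism A/a → F, then F is a field. -/
universe u

/-- If `F` is a non-zero commutative ring, `I` a non-empty index set, and every proper
ideal `a` of `A = F[t_i | i ∈ I]` admits an `F`-algebra homomorphism `A/a → F`,
then `F` is a field. -/
theorem stmt_3 {F : Type u} {I : Type u} [CommRing F] [Nontrivial F] [Nonempty I]
    (h : ∀ a : Ideal (MvPolynomial I F), a ≠ ⊤ →
      Nonempty ((MvPolynomial I F ⧸ a) →ₐ[F] F)) :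
    IsField F := by
  -- Key claim: every proper ideal of F is zero.
  have key : ∀ m : Ideal F, m ≠ ⊤ → ∀ x ∈ m, x = 0 := by
    intro m hm x hx
    set a : Ideal (MvPolynomial I F) := Ideal.map MvPolynomial.C m with ha
    have haT : a ≠ ⊤ := by
      intro htop
      apply hm
      have h1 : (1 : MvPolynomial I F) ∈ a := htop ▸ Submodule.mem_top
      rw [ha, MvPolynomial.mem_map_C_iff] at h1
      have := h1 0
      exact (Ideal.eq_top_iff_one m).2 (by simpa using this)
    obtain ⟨φ⟩ := h a haT
    have hCx : (MvPolynomial.C x : MvPolynomial I F) ∈ a :=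
      Ideal.mem_map_of_mem _ hx
    have hzero : (Ideal.Quotient.mk a (MvPolynomial.C x)) = 0 :=
      (Ideal.Quotient.eq_zero_iff_mem).2 hCx
    have halg : Ideal.Quotient.mk a (MvPolynomial.C x)
        = algebraMap F (MvPolynomial I F ⧸ a) x := rfl
    calc x = φ (algebraMap F (MvPolynomial I F ⧸ a) x) := (φ.commutes x).symm
      _ = φ 0 := by rw [← halg, hzero]
      _ = 0 := map_zero φ
  refine ⟨exists_pair_ne F, mul_comm, ?_⟩
  intro a ha
  by_cases hs : Ideal.span {a} = ⊤
  · obtain ⟨b, hb⟩ := (Ideal.span_singleton_eq_top).1 hs |>.exists_right_inv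
    exact ⟨b, hb⟩
  · exact absurd (key _ hs a (Ideal.subset_span rfl)) ha
end

section
/- Let F be a non-zero commutative ring, I a non-empty index set, and A = F[t_i | i ∈ I]. If for every proper ideal a of A there exists an F-algebra homomorphism A/a → F, then F is an algebraically closed field (every non-constant polynomial in one variable over F has a root in F). -/
universe u

/-- If `F` is a non-zero commutative ring, `I` a non-empty index set, and every proper
ideal `a` of `A = F[t_i | i ∈ I]` admits an `F`-algebra homomorphism `A/a → F`,
then `F` is an algebraically closed field: `F` is a field and every non-constant
polynomial in one variable over `F` has a root in `F`. -/
theorem stmt_4 {F : Type u} {I : Type u} [CommRing F] [Nontrivial F] [Nonempty I]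
    (h : ∀ a : Ideal (MvPolynomial I F), a ≠ ⊤ →
      Nonempty ((MvPolynomial I F ⧸ a) →ₐ[F] F)) :
    IsField F ∧ ∀ p : Polynomial F, 0 < p.degree → ∃ x : F, p.eval x = 0 := by
  classical
  have hfield : IsField F := by
    refine ⟨exists_pair_ne F, mul_comm, ?_⟩
    intro x hx
    by_cases htop : (Ideal.span {(MvPolynomial.C x : MvPolynomial I F)}
        : Ideal (MvPolynomial I F)) = ⊤
    · rw [Ideal.span_singleton_eq_top] at htop
      have hu : IsUnit x := by
        have := htop.map (MvPolynomial.constantCoeff (R := F) (σ := I))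
        simpa using this
      obtain ⟨u, rfl⟩ := hu
      exact ⟨u.inv, u.val_inv⟩
    · exfalso
      obtain ⟨φ⟩ := h _ htop
      have h0 : (Ideal.Quotient.mk (Ideal.span {(MvPolynomial.C x : MvPolynomial I F)}))
          (MvPolynomial.C x) = 0 := by
        rw [Ideal.Quotient.eq_zero_iff_mem]
        exact Ideal.mem_span_singleton_self _
      have h1 := φ.commutes x
      rw [show (algebraMap F (MvPolynomial I F ⧸
          Ideal.span {(MvPolynomial.C x : MvPolynomial I F)})) x =
          (Ideal.Quotient.mk (Ideal.span {(MvPolynomial.C x : MvPolynomial I F)}))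
          (MvPolynomial.C x) from rfl, h0, map_zero] at h1
      exact hx h1.symm
  refine ⟨hfield, ?_⟩
  intro p hp
  obtain ⟨i0⟩ := ‹Nonempty I›
  have hq : Ideal.span {(Polynomial.aeval (MvPolynomial.X i0 : MvPolynomial I F) p)} ≠ ⊤ := by
    intro htop
    rw [Ideal.span_singleton_eq_top] at htop
    letI : Field F := hfield.toField
    set ψ := MvPolynomial.aeval (R := F) (fun i : I =>
        if i = i0 then (Polynomial.X : Polynomial F) else 0) with hψ
    have hmap := htop.map ψ
    have hq2 : ψ (Polynomial.aeval (MvPolynomial.X i0 : MvPolynomial I F) p) = p := by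
      rw [← Polynomial.aeval_algHom_apply]
      simp [hψ]
    rw [hq2] at hmap
    have hdeg := Polynomial.degree_eq_zero_of_isUnit hmap
    rw [hdeg] at hp
    exact lt_irrefl _ hp
  obtain ⟨φ⟩ := h _ hq
  set π := Ideal.Quotient.mkₐ F
    (Ideal.span {(Polynomial.aeval (MvPolynomial.X i0 : MvPolynomial I F) p)}) with hπ
  refine ⟨φ (π (MvPolynomial.X i0)), ?_⟩
  have hπq : π (Polynomial.aeval (MvPolynomial.X i0 : MvPolynomial I F) p) = 0 := by
    rw [hπ]
    simp only [Ideal.Quotient.mkₐ_eq_mk]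
    rw [Ideal.Quotient.eq_zero_iff_mem]
    exact Ideal.mem_span_singleton_self _
  have hcomp := Polynomial.aeval_algHom_apply (φ.comp π) (MvPolynomial.X i0) p
  simp only [AlgHom.comp_apply] at hcomp
  rw [hπq, map_zero] at hcomp
  rw [← Polynomial.coe_aeval_eq_eval]
  exact hcomp
end

section
/- Let F be a field and I a non-empty index set, A = F[t_i | i ∈ I]. Then the following are equivalent: (1) for every ideal a of A, V(a) = ∅ iff a = A; (2) every field extension K of F which is generated as an F-algebra by a family (u_i)_{i ∈ I} of elements indexed by I (i.e. K = F[u_i | i ∈ I]) is trivial, K = F. -/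
/-!
If `V(a) = ∅` only for `a = A`, a field `K = F[u_i]` is `A ⧸ ker (aeval u)` with a proper kernel,
so the kernel has a zero `x ∈ F^I`; evaluation at `x` then factors through an `F`-algebra map
`K → F`, which is injective because `K` is a field, so `K = F`. Conversely, a proper ideal lies
in a maximal ideal `m`, and `A ⧸ m` is a field generated by the classes of the variables; if it
equals `F`, the images of the `t_i` in `F` form a common zero of `m`, hence of `a`.
-/

universe u

open MvPolynomial

section

variable {F K σ : Type*} [Field F]

theorem surjective_algebraMap_of_algHom [DivisionRing K] [Algebra F K] (ψ : K →ₐ[F] F) :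
    Function.Surjective (algebraMap F K) :=
  fun k => ⟨ψ k, ψ.toRingHom.injective (ψ.commutes (ψ k))⟩

theorem Algebra.adjoin_range_comp_X_eq_top [CommRing K] [Algebra F K]
    {φ : MvPolynomial σ F →ₐ[F] K} (hφ : Function.Surjective φ) :
    Algebra.adjoin F (Set.range (φ ∘ X)) = ⊤ := by
  rwa [Algebra.adjoin_range_eq_range_aeval, ← aeval_unique, AlgHom.range_eq_top]

theorem MvPolynomial.nonempty_algHom_of_mem_zeroLocus_ker [CommRing K] [Algebra F K]
    {φ : MvPolynomial σ F →ₐ[F] K} (hφ : Function.Surjective φ) {x : σ → F}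
    (hx : x ∈ zeroLocus F (RingHom.ker φ)) : Nonempty (K →ₐ[F] F) :=
  ⟨(Ideal.Quotient.liftₐ (RingHom.ker φ) (aeval x) hx).comp
    (Ideal.quotientKerAlgEquivOfSurjective hφ).symm⟩

theorem MvPolynomial.exists_mem_zeroLocus_ker_of_surjective_algebraMap [Field K] [Algebra F K]
    (hK : Function.Surjective (algebraMap F K)) (φ : MvPolynomial σ F →ₐ[F] K) :
    ∃ x : σ → F, x ∈ zeroLocus F (RingHom.ker φ) := by
  choose x hx using fun i => hK (φ (X i))
  have hφ : φ = aeval (algebraMap F K ∘ x) := by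
    rw [aeval_unique φ]
    congr 1
    ext i
    exact (hx i).symm
  refine ⟨x, fun p hp => ?_⟩
  rw [RingHom.mem_ker, hφ] at hp
  exact (aeval_algebraMap_eq_zero_iff_of_injective K (algebraMap F K).injective).1 hp

end

theorem stmt_10_general {F : Type u} {I : Type u} [Field F] :
    (∀ a : Ideal (MvPolynomial I F), MvPolynomial.zeroLocus F a = ∅ ↔ a = ⊤) ↔
    (∀ (K : Type u) [Field K] [Algebra F K] (u : I → K),
      Algebra.adjoin F (Set.range u) = ⊤ → Function.Surjective (algebraMap F K)) := by
  constructor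
  · intro hV K _ _ u hu
    have hφ : Function.Surjective (aeval (R := F) u) := by
      rwa [← AlgHom.range_eq_top, ← Algebra.adjoin_range_eq_range_aeval]
    obtain ⟨x, hx⟩ :=
      Set.nonempty_iff_ne_empty.2 (mt (hV _).1 (RingHom.ker_ne_top (aeval (R := F) u)))
    obtain ⟨ψ⟩ := nonempty_algHom_of_mem_zeroLocus_ker hφ hx
    exact surjective_algebraMap_of_algHom ψ
  · intro hK a
    refine ⟨fun hV => by_contra fun ha => ?_, fun ha => ha ▸ zeroLocus_top⟩
    obtain ⟨m, hm, ham⟩ := Ideal.exists_le_maximal a ha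
    let := Ideal.Quotient.field m
    have hF := hK _ _ (Algebra.adjoin_range_comp_X_eq_top (Ideal.Quotient.mkₐ_surjective F m))
    obtain ⟨x, hx⟩ :=
      exists_mem_zeroLocus_ker_of_surjective_algebraMap hF (Ideal.Quotient.mkₐ F m)
    have hmx : x ∈ zeroLocus F m := zeroLocus_anti_mono (Ideal.Quotient.mkₐ_ker F m).ge hx
    exact (hV ▸ zeroLocus_anti_mono ham hmx : x ∈ (∅ : Set (I → F)))

/-- For a field `F` and a non-empty index set `I` with `A = F[t_i | i ∈ I]`, the
following are equivalent: (1) for every ideal `a` of `A`, `V(a) = ∅` iff `a = A`;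
(2) every field extension `K` of `F` which is generated as an `F`-algebra by a family
`(u_i)_{i ∈ I}` is trivial, i.e. the structure map `F → K` is surjective. -/
theorem stmt_10 {F : Type u} {I : Type u} [Field F] [Nonempty I] :
    (∀ a : Ideal (MvPolynomial I F), MvPolynomial.zeroLocus F a = ∅ ↔ a = ⊤) ↔
    (∀ (K : Type u) [Field K] [Algebra F K] (u : I → K),
      Algebra.adjoin F (Set.range u) = ⊤ → Function.Surjective (algebraMap F K)) :=
  stmt_10_general
end

section
/- Let F be a field and I a non-empty index set, A = F[t_i | i ∈ I]. Then the following are equivalent: (1) for every ideal a of A, V(a) = ∅ iff a = A; (2) for every ideal a of A, I(V(a)) = √a. -/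
set_option maxHeartbeats 1000000
set_option synthInstance.maxHeartbeats 400000


universe u

open MvPolynomial Ideal

/-- Weak Nullstellensatz transfers along an equivalence of index types. -/
theorem weakNSS_transfer {F : Type u} [Field F] {σ τ : Type u} (e : σ ≃ τ)
    (h : ∀ a : Ideal (MvPolynomial τ F), MvPolynomial.zeroLocus F a = ∅ ↔ a = ⊤)
    (b : Ideal (MvPolynomial σ F)) : MvPolynomial.zeroLocus F b = ∅ ↔ b = ⊤ := by
  classical
  let ρ : MvPolynomial σ F →+* MvPolynomial τ F := (renameEquiv F e).toRingEquiv
  have hbij : Function.Bijective ρ := (renameEquiv F e).toRingEquiv.bijective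
  have h1 : MvPolynomial.zeroLocus F b = ∅ ↔ MvPolynomial.zeroLocus F (b.map ρ) = ∅ := by
    constructor
    · intro hb
      rw [Set.eq_empty_iff_forall_notMem] at hb ⊢
      intro y hy
      apply hb (y ∘ e)
      intro p hp
      have : eval y (ρ p) = 0 := hy _ (Ideal.mem_map_of_mem ρ hp)
      simpa [ρ, renameEquiv, eval_rename] using this
    · intro hb
      rw [Set.eq_empty_iff_forall_notMem] at hb ⊢
      intro x hx
      apply hb (x ∘ e.symm)
      have : Ideal.map ρ b ≤ MvPolynomial.vanishingIdeal F {(x ∘ e.symm : τ → F)} := by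
        rw [Ideal.map, Ideal.span_le]
        rintro q ⟨p, hp, rfl⟩
        intro y hy
        rw [Set.mem_singleton_iff] at hy
        subst hy
        have : (x ∘ e.symm) ∘ e = x := by ext s; simp
        simpa [ρ, renameEquiv, eval_rename, this] using hx p hp
      intro q hq
      exact this hq _ rfl
  have h2 : b.map ρ = ⊤ ↔ b = ⊤ := by
    constructor
    · intro ht
      have := Ideal.comap_map_of_bijective ρ hbij (I := b)
      rw [ht] at this
      simpa using this.symm
    · rintro rfl
      exact Ideal.map_top ρ
  rw [h1, h ((b.map ρ)), h2]

/-- Rabinowitsch trick: weak Nullstellensatz with one extra variable implies the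
strong Nullstellensatz. -/
theorem strong_of_weak_option {F : Type u} {I : Type u} [Field F]
    (hw : ∀ b : Ideal (MvPolynomial (Option I) F), MvPolynomial.zeroLocus F b = ∅ ↔ b = ⊤)
    (a : Ideal (MvPolynomial I F)) :
    MvPolynomial.vanishingIdeal F (MvPolynomial.zeroLocus F a) = a.radical := by
  classical
  refine le_antisymm ?_ (radical_le_vanishingIdeal_zeroLocus a)
  intro f hf
  by_contra hfr
  rw [radical_eq_sInf, Submodule.mem_sInf] at hfr
  push_neg at hfr
  obtain ⟨P, ⟨haP, hP⟩, hfP⟩ := hfr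
  haveI := hP
  let D := MvPolynomial I F ⧸ P
  let K := FractionRing D
  let g : MvPolynomial I F →+* K := (algebraMap D K).comp (Ideal.Quotient.mk P)
  have hg0 : ∀ p ∈ P, g p = 0 := by
    intro p hp
    simp only [g, RingHom.comp_apply]
    rw [Ideal.Quotient.eq_zero_iff_mem.mpr hp, map_zero]
  have hgf : g f ≠ 0 := by
    intro h
    simp only [g, RingHom.comp_apply] at h
    have : (Ideal.Quotient.mk P) f = 0 :=
      IsFractionRing.injective D K (by simpa using h)
    exact hfP (Ideal.Quotient.eq_zero_iff_mem.mp this)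
  -- evaluation sending X (some i) to g (X i) and X none to (g f)⁻¹
  let v : Option I → K := fun o => o.elim (g f)⁻¹ (fun i => g (X i))
  let ψ : MvPolynomial (Option I) F →+* K := eval₂Hom (g.comp C) v
  have hψren : ∀ p : MvPolynomial I F, ψ (rename some p) = g p := by
    intro p
    show eval₂ (g.comp C) v (rename some p) = g p
    rw [eval₂_rename]
    have : g p = eval₂ (g.comp C) (g ∘ X) p := by
      rw [← eval₂_comp_left, eval₂_eta]
    rw [this]
    rfl
  -- the Rabinowitsch ideal
  set b : Ideal (MvPolynomial (Option I) F) :=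
    Ideal.span ((rename some) '' (a : Set (MvPolynomial I F)) ∪ {1 - X none * rename some f})
    with hb
  have hbz : MvPolynomial.zeroLocus F b = ∅ := by
    rw [Set.eq_empty_iff_forall_notMem]
    intro x hx
    have hmem : (x ∘ some) ∈ MvPolynomial.zeroLocus F a := by
      intro p hp
      have := hx _ (Ideal.subset_span (Or.inl ⟨p, hp, rfl⟩))
      rwa [aeval_rename] at this
    have hfx : eval (x ∘ some) f = 0 := hf _ hmem
    have h1 : eval x (1 - X none * rename some f) = 0 :=
      hx _ (Ideal.subset_span (Or.inr rfl))
    rw [map_sub, map_one, _root_.map_mul, eval_rename, hfx, mul_zero, sub_zero] at h1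
    exact one_ne_zero h1
  have hbt : b = ⊤ := (hw b).mp hbz
  have hker : b ≤ RingHom.ker ψ := by
    rw [hb, Ideal.span_le]
    rintro q (⟨p, hp, rfl⟩ | hq)
    · show ψ _ = 0
      rw [hψren]
      exact hg0 p (haP hp)
    · rw [Set.mem_singleton_iff] at hq
      subst hq
      show ψ _ = 0
      rw [map_sub, map_one, _root_.map_mul, hψren]
      have hnone : ψ (X none) = (g f)⁻¹ := by
        show eval₂ (g.comp C) v (X none) = _
        rw [eval₂_X]
        rfl
      rw [hnone, inv_mul_cancel₀ hgf, sub_self]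
  have : ψ 1 = 0 := hker (hbt ▸ Submodule.mem_top)
  rw [map_one] at this
  exact one_ne_zero this

theorem algClosed_of_weak {F : Type u} {I : Type u} [Field F] [Nonempty I]
    (hw : ∀ a : Ideal (MvPolynomial I F), MvPolynomial.zeroLocus F a = ∅ ↔ a = ⊤) :
    IsAlgClosed F := by
  classical
  apply IsAlgClosed.of_exists_root
  intro p _ hirr
  by_contra hroot
  push_neg at hroot
  obtain ⟨i0⟩ := ‹Nonempty I›
  set P : MvPolynomial I F := p.eval₂ (C : F →+* MvPolynomial I F) (X i0) with hP
  have hz : MvPolynomial.zeroLocus F (Ideal.span {P}) = ∅ := by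
    rw [Set.eq_empty_iff_forall_notMem]
    intro x hx
    have : eval x P = 0 := hx P (Ideal.subset_span rfl)
    rw [hP, Polynomial.hom_eval₂] at this
    have hcomp : (eval x).comp (C : F →+* MvPolynomial I F) = RingHom.id F := by
      ext c; simp
    rw [hcomp, eval_X] at this
    exact hroot (x i0) (by exact this)
  have htop := (hw _).mp hz
  have hunit : IsUnit P := Ideal.span_singleton_eq_top.mp htop
  -- map back to Polynomial F
  let φ : MvPolynomial I F →+* Polynomial F :=
    eval₂Hom (Polynomial.C) (fun _ => Polynomial.X)
  have hφP : φ P = p := by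
    rw [hP, Polynomial.hom_eval₂]
    have hcomp : φ.comp (C : F →+* MvPolynomial I F) = Polynomial.C := by
      ext c; simp [φ]
    rw [hcomp]
    have : φ (X i0) = Polynomial.X := by simp [φ]
    rw [this, Polynomial.eval₂_C_X]
  exact hirr.not_isUnit (hφP ▸ hunit.map φ)

/-- For a field `F` and a non-empty index set `I` with `A = F[t_i | i ∈ I]`, the
following are equivalent: (1) the weak Nullstellensatz: for every ideal `a` of `A`,
`V(a) = ∅` iff `a = A`; (2) the strong Nullstellensatz: for every ideal `a` of `A`,
`I(V(a)) = √a`. -/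
theorem stmt_12 {F : Type u} {I : Type u} [Field F] [Nonempty I] :
    (∀ a : Ideal (MvPolynomial I F), MvPolynomial.zeroLocus F a = ∅ ↔ a = ⊤) ↔
    (∀ a : Ideal (MvPolynomial I F),
      MvPolynomial.vanishingIdeal F (MvPolynomial.zeroLocus F a) = a.radical) := by
  constructor
  · intro hw a
    cases finite_or_infinite I with
    | inl hfin =>
      haveI : IsAlgClosed F := algClosed_of_weak hw
      exact vanishingIdeal_zeroLocus_eq_radical a
    | inr hinf =>
      have hcard : Nonempty (Option I ≃ I) := by
        rw [← Cardinal.eq, Cardinal.mk_option,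
          Cardinal.add_one_eq (Cardinal.infinite_iff.mp hinf)]
      obtain ⟨e⟩ := hcard
      exact strong_of_weak_option (fun b => weakNSS_transfer e hw b) a
  · intro hs a
    constructor
    · intro h
      have := hs a
      rw [h, vanishingIdeal_empty] at this
      exact Ideal.radical_eq_top.mp this.symm
    · rintro rfl
      rw [zeroLocus_top]
      rfl
end

section
/- Let F be an algebraically closed field and I ⊆ J index sets with I non-empty and |I| < |F|. Let a be an ideal of F[t_i | i ∈ I] and let u = a·F[t_j | j ∈ J] be its extension to the larger polynomial ring. Then I(V(u)) = √u, even if |J| ≥ |F|. -/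
universe u

set_option synthInstance.maxHeartbeats 1000000
set_option maxHeartbeats 1000000

open Cardinal in
theorem alg_of_rank_lt' {F K : Type u} [Field F] [Field K] [Algebra F K]
    (h : Module.rank F K < #F) : Algebra.IsAlgebraic F K := by
  constructor
  intro x
  by_contra hx
  have : Transcendental F x := hx
  exact absurd (this.linearIndependent_sub_inv.cardinal_le_rank.trans_lt h) (lt_irrefl _)

open Cardinal Polynomial in
theorem exists_algHom_ne_zero {F A : Type u} [Field F] [IsAlgClosed F] [CommRing A] [IsDomain A]
    [Algebra F A] (hA : Module.rank F A < #F) (hℵ : ℵ₀ < #F) (fb : A) (hf : fb ≠ 0) :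
    ∃ φ : A →ₐ[F] F, φ fb ≠ 0 := by
  haveI : IsDomain (Localization.Away fb) :=
    IsLocalization.isDomain_of_le_nonZeroDivisors (Localization.Away fb)
      (powers_le_nonZeroDivisors_of_noZeroDivisors hf)
  -- surjection from the polynomial ring
  let ψ : Polynomial A →ₐ[A] Localization.Away fb :=
    Polynomial.aeval (IsLocalization.Away.invSelf fb)
  have hψ : Function.Surjective ψ := by
    intro z
    obtain ⟨⟨x, y⟩, rfl⟩ := IsLocalization.mk'_surjective (Submonoid.powers fb) z
    dsimp only
    obtain ⟨n, hn⟩ := y.2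
    refine ⟨Polynomial.C x * Polynomial.X ^ n, ?_⟩
    have h1 : y = (⟨fb, Submonoid.mem_powers fb⟩ : Submonoid.powers fb) ^ n := by
      ext; simpa using hn.symm
    have h2 : (IsLocalization.Away.invSelf fb) ^ n = IsLocalization.mk' (Localization.Away fb)
        (1 : A) ((⟨fb, Submonoid.mem_powers fb⟩ : Submonoid.powers fb) ^ n) := by
      rw [IsLocalization.Away.invSelf, ← IsLocalization.mk'_pow, one_pow]
    rw [h1, IsLocalization.mk'_eq_mul_mk'_one, ← h2]
    simp [ψ]
  -- rank bound for the localization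
  have hrankB : Module.rank F (Localization.Away fb) < #F := by
    have hXrank : Module.rank F (Polynomial A) < #F := by
      have e2 := (Polynomial.toFinsuppIsoAlg A).toLinearEquiv.restrictScalars F
      rw [e2.rank_eq]
      have h3 : Module.rank F (AddMonoidAlgebra A ℕ) = Module.rank F (ℕ →₀ A) :=
        (AddMonoidAlgebra.coeffLinearEquiv F).rank_eq
      rw [h3, rank_finsupp F A ℕ]
      simp only [Cardinal.mk_nat, Cardinal.lift_aleph0, Cardinal.lift_id'.{0,u}]
      exact Cardinal.mul_lt_of_lt hℵ.le hℵ hA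
    exact ((ψ.restrictScalars F).toLinearMap.rank_le_of_surjective hψ).trans_lt hXrank
  obtain ⟨m, hm⟩ := Ideal.exists_maximal (Localization.Away fb)
  haveI := hm
  letI : Field (Localization.Away fb ⧸ m) := Ideal.Quotient.field m
  have hrankK : Module.rank F (Localization.Away fb ⧸ m) < #F :=
    ((Ideal.Quotient.mkₐ F m).toLinearMap.rank_le_of_surjective
      Ideal.Quotient.mk_surjective).trans_lt hrankB
  haveI : Algebra.IsAlgebraic F (Localization.Away fb ⧸ m) := alg_of_rank_lt' hrankK
  haveI : Algebra.IsIntegral F (Localization.Away fb ⧸ m) := Algebra.IsAlgebraic.isIntegral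
  have hbij : Function.Bijective (algebraMap F (Localization.Away fb ⧸ m)) :=
    ⟨(algebraMap F _).injective, IsAlgClosed.algebraMap_bijective_of_isIntegral.2⟩
  let e : F ≃ₐ[F] (Localization.Away fb ⧸ m) := AlgEquiv.ofBijective (Algebra.ofId F _) hbij
  let χ : A →ₐ[F] (Localization.Away fb ⧸ m) :=
    (Ideal.Quotient.mkₐ F m).comp ((IsScalarTower.toAlgHom A A (Localization.Away fb)).restrictScalars F)
  refine ⟨e.symm.toAlgHom.comp χ, ?_⟩
  have hunit : IsUnit (χ fb) := by
    have : IsUnit (algebraMap A (Localization.Away fb) fb) :=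
      IsUnit.of_mul_eq_one _ (IsLocalization.Away.mul_invSelf fb)
    exact this.map (Ideal.Quotient.mkₐ F m)
  intro h0
  have h1 : e.symm (χ fb) = 0 := h0
  have h2 : χ fb = 0 := by
    calc χ fb = e (e.symm (χ fb)) := (e.apply_symm_apply _).symm
    _ = e 0 := by rw [h1]
    _ = 0 := map_zero e
  exact hunit.ne_zero h2

open Cardinal MvPolynomial in
theorem nullstellensatz_card {F : Type u} {σ : Type u} [Field F] [IsAlgClosed F]
    (hcard : #σ < #F) (a : Ideal (MvPolynomial σ F)) :
    vanishingIdeal F (zeroLocus F a) ≤ a.radical := by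
  cases finite_or_infinite σ with
  | inl h => exact (vanishingIdeal_zeroLocus_eq_radical a).le
  | inr h =>
    have hσ : ℵ₀ ≤ #σ := Cardinal.infinite_iff.mp h
    have hℵ : ℵ₀ < #F := hσ.trans_lt hcard
    intro f hf
    by_contra hfr
    rw [Ideal.radical_eq_sInf, Ideal.mem_sInf] at hfr
    push_neg at hfr
    obtain ⟨p, ⟨hap, hp⟩, hfp⟩ := hfr
    haveI := hp
    have hfbar : Ideal.Quotient.mk p f ≠ 0 := by
      simpa [Ideal.Quotient.eq_zero_iff_mem] using hfp
    have hrankA : Module.rank F (MvPolynomial σ F ⧸ p) < #F := by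
      have h1 : Module.rank F (MvPolynomial σ F) < #F := by
        rw [MvPolynomial.rank_eq_lift, Cardinal.mk_finsupp_nat, Cardinal.lift_id,
          max_eq_left hσ]
        exact hcard
      exact ((Ideal.Quotient.mkₐ F p).toLinearMap.rank_le_of_surjective
        Ideal.Quotient.mk_surjective).trans_lt h1
    obtain ⟨φ, hφ⟩ := exists_algHom_ne_zero hrankA hℵ (Ideal.Quotient.mk p f) hfbar
    set x : σ → F := fun s => φ (Ideal.Quotient.mk p (X s)) with hxdef
    have key : ∀ g : MvPolynomial σ F, eval x g = φ (Ideal.Quotient.mk p g) := by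
      have : (MvPolynomial.aeval x : MvPolynomial σ F →ₐ[F] F)
          = φ.comp (Ideal.Quotient.mkₐ F p) := by
        apply MvPolynomial.algHom_ext
        intro s
        simp [hxdef]
      intro g
      have hg := congrArg (fun ψ => ψ g) this
      rw [show (eval x) g = MvPolynomial.aeval x g by rw [MvPolynomial.aeval_def, Algebra.algebraMap_self]; rfl]
      simpa using hg
    have hx : x ∈ zeroLocus F a := by
      intro g hg
      change eval x g = 0
      rw [key g]
      have : Ideal.Quotient.mk p g = 0 := (Ideal.Quotient.eq_zero_iff_mem).mpr (hap hg)
      rw [this, map_zero]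
    have := hf x hx
    change eval x f = 0 at this
    rw [key f] at this
    exact hφ this

open MvPolynomial

/-- **Persistence of the strong Nullstellensatz.** Let `F` be an algebraically closed
field and `I ⊆ J` index sets with `I` non-empty and `|I| < |F|` (no condition on `|J|`).
If `a` is an ideal of `F[t_i | i ∈ I]` and `u = a·F[t_j | j ∈ J]` is its extension along
the inclusion `F[t_i | i ∈ I] → F[t_j | j ∈ J]` (renaming of variables), then
`I(V(u)) = √u`. -/
theorem stmt_15 {F : Type u} {J : Type u} [Field F] [IsAlgClosed F]
    (I : Set J) (hI : I.Nonempty) (hcard : Cardinal.mk I < Cardinal.mk F)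
    (a : Ideal (MvPolynomial I F))
    (u : Ideal (MvPolynomial J F))
    (hu : u = Ideal.map (MvPolynomial.rename (Subtype.val : I → J)) a) :
    MvPolynomial.vanishingIdeal F (MvPolynomial.zeroLocus F u) = u.radical := by
  classical
  refine le_antisymm ?_ (radical_le_vanishingIdeal_zeroLocus u)
  intro f hf
  let e : (↥(Iᶜ) ⊕ ↥I) ≃ J := (Equiv.sumComm _ _).trans (Equiv.Set.sumCompl I)
  have he_inr : ∀ i : I, e (Sum.inr i) = (i : J) := fun i => by
    simp [e, Equiv.Set.sumCompl_apply_inl]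
  let T : MvPolynomial J F ≃ₐ[F] MvPolynomial ↥(Iᶜ) (MvPolynomial ↥I F) :=
    (renameEquiv F e.symm).trans (sumAlgEquiv F _ _)
  -- step 1 : each coefficient of T f vanishes on V(a)
  have key : ∀ d, (T f).coeff d ∈ vanishingIdeal F (zeroLocus F a) := by
    intro d
    rw [mem_vanishingIdeal_iff]
    intro z hz
    have hzero : MvPolynomial.map (eval z : MvPolynomial ↥I F →+* F) (T f) = 0 := by
      apply MvPolynomial.funext
      intro y
      rw [map_zero (eval y), eval_map]
      -- eval₂ (eval z) y (T f) = eval (Sum.elim y z ∘ e.symm) f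
      have claimA : ∀ q : MvPolynomial (↥(Iᶜ) ⊕ ↥I) F,
          eval₂ (eval z : MvPolynomial ↥I F →+* F) y (sumAlgEquiv F ↥(Iᶜ) ↥I q)
            = eval (Sum.elim y z) q := by
        intro q
        have hhom : (eval₂Hom (eval z : MvPolynomial ↥I F →+* F) y).comp
              (sumAlgEquiv F ↥(Iᶜ) ↥I).toAlgHom.toRingHom
            = eval (Sum.elim y z) := by
          apply MvPolynomial.ringHom_ext
          · intro r; simp
          · rintro (s | s) <;> simp
        have := congrArg (fun ψ => ψ q) hhom
        simpa using this
      have hTf : T f = sumAlgEquiv F ↥(Iᶜ) ↥I (rename (⇑e.symm) f) := rfl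
      rw [hTf, claimA, eval_rename]
      -- the point lies in the zero locus of u
      have hx : (Sum.elim y z ∘ ⇑e.symm) ∈ zeroLocus F u := by
        rw [mem_zeroLocus_iff]
        have hle : u ≤ RingHom.ker (eval (Sum.elim y z ∘ ⇑e.symm) :
            MvPolynomial J F →+* F) := by
          rw [hu, Ideal.map_le_iff_le_comap]
          intro g hg
          rw [Ideal.mem_comap, RingHom.mem_ker, eval_rename]
          have hcomp : (Sum.elim y z ∘ ⇑e.symm) ∘ (Subtype.val : I → J) = z := by
            funext i
            have h1 : e.symm (i : J) = Sum.inr i := by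
              rw [Equiv.symm_apply_eq]; exact (he_inr i).symm
            simp [Function.comp, h1]
          rw [hcomp]
          exact hz g hg
        intro p hp
        exact hle hp
      exact hf _ hx
    have := congrArg (fun q => coeff d q) hzero
    simpa [coeff_map] using this
  have hrad : ∀ d, (T f).coeff d ∈ a.radical := fun d => nullstellensatz_card hcard a (key d)
  -- step 2 : conclude f ∈ u.radical
  have hsymmC : ∀ c : MvPolynomial ↥I F,
      T.symm (C c) = rename (Subtype.val : I → J) c := by
    intro c
    have h2 : (sumAlgEquiv F ↥(Iᶜ) ↥I) ((rename Sum.inr) c) = C c := by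
      have := congrArg (fun ψ => ψ c) (sumAlgEquiv_comp_rename_inr F ↥(Iᶜ) ↥I)
      simpa using this
    have h3 : T.symm (C c) = (renameEquiv F e.symm).symm ((sumAlgEquiv F ↥(Iᶜ) ↥I).symm (C c)) :=
      rfl
    rw [h3, ← h2, AlgEquiv.symm_apply_apply, renameEquiv_symm, Equiv.symm_symm]
    have hfun : (⇑e ∘ Sum.inr : ↥I → J) = Subtype.val := funext fun i => he_inr i
    rw [renameEquiv_apply, rename_rename, hfun]
  have hform : f = ∑ d ∈ (T f).support, T.symm (monomial d ((T f).coeff d)) := by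
    conv_lhs => rw [← T.symm_apply_apply f, MvPolynomial.as_sum (T f)]
    rw [map_sum]
  rw [hform]
  apply Ideal.sum_mem
  intro d hd
  have hmon : T.symm (monomial d ((T f).coeff d))
      = rename (Subtype.val : I → J) ((T f).coeff d) * T.symm (monomial d 1) := by
    have h1 : monomial d ((T f).coeff d) = C ((T f).coeff d) * monomial d 1 := by
      rw [C_mul_monomial, mul_one]
    rw [h1, map_mul, hsymmC]
  rw [hmon]
  apply Ideal.mul_mem_right
  have : rename (Subtype.val : I → J) ((T f).coeff d)
      ∈ Ideal.map (rename (Subtype.val : I → J)) a.radical :=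
    Ideal.mem_map_of_mem _ (hrad d)
  exact hu ▸ (Ideal.map_radical_le (f := rename (Subtype.val : I → J)) (I := a) this)
end

section
/- Let F be an infinite integral domain and I ⊆ J index sets, with π_I^J : F^J → F^I the canonical projection. Then for every non-empty subset X ⊆ F^I one has I((π_I^J)^{-1}(X)) = I(X)·F[t_j | j ∈ J], i.e. the vanishing ideal in F[J] of the cylinder over X equals the extension of the vanishing ideal of X in F[I]. -/
universe u

/-- The vanishing ideal of a subset `X ⊆ F^σ` in the polynomial ring `F[t_i | i ∈ σ]`
over a commutative ring `F`: all polynomials vanishing at every point of `X`. -/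
def vanishingIdealOf {F σ : Type u} [CommRing F] (X : Set (σ → F)) :
    Ideal (MvPolynomial σ F) where
  carrier := {f | ∀ x ∈ X, MvPolynomial.eval x f = 0}
  zero_mem' := fun x _ => map_zero _
  add_mem' := fun {a b} ha hb x hx => by simp [map_add, ha x hx, hb x hx]
  smul_mem' := fun c f hf x hx => by simp [smul_eq_mul, map_mul, hf x hx]

open MvPolynomial

section Aux

lemma auxAeval1 {F σ : Type u} [CommRing F] (g : σ → F) (p : MvPolynomial σ F) :
    aeval g p = eval g p := by
  rw [aeval_def, Algebra.algebraMap_self]; rfl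

lemma auxAeval2 {F σ τ : Type u} [CommRing F] (g : σ → F)
    (p : MvPolynomial τ (MvPolynomial σ F)) :
    mapAlgHom (R := F) (aeval g) p = MvPolynomial.map (eval g) p := by
  show MvPolynomial.map _ p = _
  congr 1

noncomputable section

variable {F : Type u} {J : Type u} [CommRing F] (I : Set J)

def myCylE : J ≃ (↥Iᶜ ⊕ ↥I) := by
  classical
  exact ((Equiv.sumComm ↥Iᶜ ↥I).trans (Equiv.Set.sumCompl I)).symm

lemma myCylE_coe (i : I) : myCylE I (↑i) = Sum.inr i := by
  classical
  rw [myCylE, Equiv.symm_apply_eq]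
  simp

lemma myCylE_notMem (j : J) (hj : j ∉ I) : myCylE I j = Sum.inl ⟨j, hj⟩ := by
  classical
  rw [myCylE, Equiv.symm_apply_eq]
  simp

def myCylPhi : MvPolynomial J F ≃ₐ[F] MvPolynomial ↥Iᶜ (MvPolynomial ↥I F) :=
  (renameEquiv F (myCylE I)).trans (sumAlgEquiv F ↥Iᶜ ↥I)

lemma myCylPhi_rename (p : MvPolynomial ↥I F) :
    myCylPhi I (rename (Subtype.val : I → J) p) = C p := by
  have h : (myCylPhi (F := F) I).toAlgHom.comp (rename (Subtype.val : I → J)) =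
      IsScalarTower.toAlgHom F (MvPolynomial ↥I F) (MvPolynomial ↥Iᶜ (MvPolynomial ↥I F)) := by
    apply MvPolynomial.algHom_ext
    intro i
    simp [myCylPhi, myCylE_coe]
  exact congrFun (congrArg (fun g => (DFunLike.coe g)) h) p

lemma myCylPhi_eval (f : MvPolynomial J F) (x' : J → F) :
    eval x' f = eval (fun c : ↥Iᶜ => x' c)
      (MvPolynomial.map (eval (fun i : ↥I => x' i)) (myCylPhi I f)) := by
  have h : (MvPolynomial.aeval x' : MvPolynomial J F →ₐ[F] F) =
      ((MvPolynomial.aeval (fun c : ↥Iᶜ => x' c)).comp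
        ((MvPolynomial.mapAlgHom (MvPolynomial.aeval (fun i : ↥I => x' i))).comp
          (myCylPhi I).toAlgHom)) := by
    apply MvPolynomial.algHom_ext
    intro j
    by_cases hj : j ∈ I
    · simp [myCylPhi, myCylE_coe I ⟨j, hj⟩]
    · simp [myCylPhi, myCylE_notMem I j hj]
  have h2 := congrFun (congrArg (fun g => (DFunLike.coe g)) h) f
  simp only [AlgHom.comp_apply, AlgEquiv.toAlgHom_eq_coe, AlgHom.coe_coe] at h2
  rw [auxAeval1, auxAeval2, auxAeval1] at h2
  exact h2

lemma myCylPhi_mem_map_iff (a : Ideal (MvPolynomial ↥I F)) (f : MvPolynomial J F) :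
    f ∈ Ideal.map (rename (Subtype.val : I → J)) a ↔
      ∀ m, MvPolynomial.coeff m (myCylPhi I f) ∈ a := by
  have hmap : Ideal.map ((myCylPhi (F := F) I : MvPolynomial J F →+* _))
      (Ideal.map (rename (Subtype.val : I → J)) a) =
      Ideal.map (C : MvPolynomial ↥I F →+* MvPolynomial ↥Iᶜ (MvPolynomial ↥I F)) a := by
    have hrfl : Ideal.map (rename (Subtype.val : I → J)) a =
        Ideal.map ((rename (Subtype.val : I → J)).toRingHom) a := rfl
    have hcomp : ((myCylPhi (F := F) I : MvPolynomial J F →+* _)).comp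
        (rename (Subtype.val : I → J)).toRingHom =
        (C : MvPolynomial ↥I F →+* MvPolynomial ↥Iᶜ (MvPolynomial ↥I F)) :=
      RingHom.ext fun p => myCylPhi_rename I p
    rw [hrfl, Ideal.map_map, hcomp]
  constructor
  · intro hf
    have : myCylPhi I f ∈ Ideal.map ((myCylPhi (F := F) I : MvPolynomial J F →+* _))
        (Ideal.map (rename (Subtype.val : I → J)) a) := Ideal.mem_map_of_mem _ hf
    rw [hmap] at this
    exact fun m => MvPolynomial.mem_map_C_iff.1 this m
  · intro hm
    have h1 : myCylPhi I f ∈ Ideal.map (C : MvPolynomial ↥I F →+* _) a :=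
      MvPolynomial.mem_map_C_iff.2 hm
    rw [← hmap] at h1
    have h2 := Ideal.comap_map_of_bijective _ (myCylPhi (F := F) I).bijective
      (I := Ideal.map (rename (Subtype.val : I → J)) a)
    rw [← h2]
    exact h1

end
end Aux

/-- Let `F` be an infinite integral domain and `I ⊆ J` index sets, with `π : F^J → F^I`
the canonical projection. For every non-empty `X ⊆ F^I`, the vanishing ideal in
`F[t_j | j ∈ J]` of the cylinder `π⁻¹(X)` equals the extension `I(X)·F[t_j | j ∈ J]` of
the vanishing ideal of `X` in `F[t_i | i ∈ I]` along the variable-renaming inclusion. -/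
theorem stmt_17 {F : Type u} {J : Type u} [CommRing F] [IsDomain F] [Infinite F]
    (I : Set J) (X : Set (I → F)) (hX : X.Nonempty) :
    vanishingIdealOf ((fun x : J → F => fun i : I => x i) ⁻¹' X) =
      Ideal.map (MvPolynomial.rename (Subtype.val : I → J)) (vanishingIdealOf X) := by
  classical
  ext f
  rw [myCylPhi_mem_map_iff]
  constructor
  · intro hf m x hx
    -- the polynomial in the complement variables obtained by evaluating coefficients at x
    set g : MvPolynomial ↥Iᶜ F := MvPolynomial.map (eval x) (myCylPhi I f) with hg
    have hg0 : g = 0 := by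
      apply MvPolynomial.funext
      intro y
      set x' : J → F := fun j => if h : j ∈ I then x ⟨j, h⟩ else y ⟨j, h⟩ with hx'
      have hres : (fun i : I => x' i) = x := by
        funext i
        simp only [hx', dif_pos i.2]
      have hmem : x' ∈ (fun x : J → F => fun i : I => x i) ⁻¹' X := by
        simpa [Set.mem_preimage, hres] using hx
      have h0 := hf x' hmem
      rw [myCylPhi_eval I f x'] at h0
      have hcres : (fun c : ↥Iᶜ => x' c) = y := by
        funext c
        simp only [hx', dif_neg c.2]
      rw [hres, hcres] at h0
      simpa [hg] using h0
    have := congrArg (MvPolynomial.coeff m) hg0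
    simpa [hg, MvPolynomial.coeff_map] using this
  · intro hm x' hx'
    rw [myCylPhi_eval I f x']
    have hx : (fun i : I => x' i) ∈ X := hx'
    have hzero : MvPolynomial.map (eval (fun i : I => x' i)) (myCylPhi I f) = 0 := by
      ext m
      simp [MvPolynomial.coeff_map, hm m _ hx]
    rw [hzero, map_zero]
end

section
/- Let F be an algebraically closed field with prime field P. Then the cardinality of F satisfies |F| = max(ℵ₀, trdeg(F : P)), where trdeg(F : P) is the transcendence degree of F over its prime field. -/
universe u

lemma bot_subfield_countable {F : Type u} [Field F] :
    Cardinal.mk (⊥ : Subfield F) ≤ Cardinal.aleph0 := by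
  rw [← Subfield.closure_empty]
  refine (Subfield.cardinalMk_closure_le_max _).trans ?_
  simp

/-- Let `F` be an algebraically closed field with prime field `P` (the bottom subfield
of `F`). Then `|F| = max(ℵ₀, trdeg(F : P))`: for any transcendence basis `x : ι → F` of
`F` over `P`, the cardinality of `F` equals the maximum of `ℵ₀` and the cardinality
of `ι`. -/
theorem stmt_18 {F : Type u} [Field F] [IsAlgClosed F]
    (ι : Type u) (x : ι → F)
    (hx : IsTranscendenceBasis (⊥ : Subfield F) x) :
    Cardinal.mk F = max Cardinal.aleph0 (Cardinal.mk ι) := by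
  have hι : Cardinal.mk ι ≤ Cardinal.mk F :=
    Cardinal.mk_le_of_injective hx.1.injective
  rcases le_or_gt (Cardinal.mk F) Cardinal.aleph0 with h | h
  · have hF : Cardinal.mk F = Cardinal.aleph0 :=
      le_antisymm h (Cardinal.aleph0_le_mk F)
    rw [hF, max_eq_left (hι.trans h)]
  · have := IsAlgClosed.cardinal_eq_cardinal_transcendence_basis_of_aleph0_lt x hx
      bot_subfield_countable h
    rw [Cardinal.lift_id, Cardinal.lift_id] at this
    rw [this, max_eq_right]
    rw [← this]
    exact h.le
end

section
/- Let F be an algebraically closed field and I an infinite index set with |F| ≤ |I|, and choose a subset H ⊆ I \ {j} (for a fixed j ∈ I) together with a bijection i ↦ a_i from H onto F. Then the F-algebra homomorphism φ : F[t_i | i ∈ I] → F(s) determined by φ(t_j) = s, φ(t_i) = 1/(s − a_i) for i ∈ H, and φ(t_i) = 0 for all other i, is surjective; consequently ker(φ) is a maximal ideal of F[t_i | i ∈ I] that is not the vanishing ideal of any point x ∈ F^I. -/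
universe u

open scoped Classical

/-- Let `F` be an algebraically closed field and `I` an infinite index set with
`|F| ≤ |I|`. Fix `j ∈ I`, a subset `H ⊆ I \ {j}` and a bijection `i ↦ a_i` from `H`
onto `F`. Then the `F`-algebra homomorphism `φ : F[t_i | i ∈ I] → F(s)` determined by
`φ(t_j) = s`, `φ(t_i) = 1/(s - a_i)` for `i ∈ H` and `φ(t_i) = 0` otherwise, is
surjective; consequently its kernel is a maximal ideal of `F[t_i | i ∈ I]` which is not
the vanishing ideal (kernel of the evaluation homomorphism) of any point `x ∈ F^I`. -/
theorem stmt_19 {F : Type u} {I : Type u} [Field F] [IsAlgClosed F] [Infinite I]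
    (hcard : Cardinal.mk F ≤ Cardinal.mk I)
    (j : I) (H : Set I) (hHj : H ⊆ {j}ᶜ) (a : H → F) (ha : Function.Bijective a)
    (φ : MvPolynomial I F →ₐ[F] RatFunc F)
    (hφ : φ = MvPolynomial.aeval fun i : I =>
      if i = j then (RatFunc.X : RatFunc F)
      else if h : i ∈ H then (RatFunc.X - RatFunc.C (a ⟨i, h⟩))⁻¹
      else 0) :
    Function.Surjective φ ∧ (RingHom.ker φ).IsMaximal ∧
      ∀ x : I → F, RingHom.ker φ ≠ RingHom.ker (MvPolynomial.eval x) := by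
  set v : I → RatFunc F := fun i : I =>
      if i = j then (RatFunc.X : RatFunc F)
      else if h : i ∈ H then (RatFunc.X - RatFunc.C (a ⟨i, h⟩))⁻¹
      else 0 with hv
  set S : Subalgebra F (RatFunc F) := φ.range with hS
  have hX : (RatFunc.X : RatFunc F) ∈ S := by
    refine ⟨MvPolynomial.X j, ?_⟩
    simp [hφ, hv]
  have hC : ∀ c : F, (RatFunc.C c : RatFunc F) ∈ S := fun c => by
    rw [← RatFunc.algebraMap_eq_C]; exact S.algebraMap_mem c
  have hinv : ∀ c : F, (RatFunc.X - RatFunc.C c)⁻¹ ∈ S := by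
    intro c
    obtain ⟨i, rfl⟩ := ha.2 c
    refine ⟨MvPolynomial.X i, ?_⟩
    have hij : (i : I) ≠ j := hHj i.2
    simp [hφ, hv, if_neg hij, dif_pos i.2]
  have hpoly : ∀ p : Polynomial F, algebraMap (Polynomial F) (RatFunc F) p ∈ S := by
    intro p
    induction p using Polynomial.induction_on with
    | C c => rw [RatFunc.algebraMap_C]; exact hC c
    | add p q hp hq => rw [map_add]; exact add_mem hp hq
    | monomial n c _ =>
      rw [map_mul, map_pow, RatFunc.algebraMap_C, RatFunc.algebraMap_X]
      exact mul_mem (hC c) (pow_mem hX _)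
  have hprodinv : ∀ m : Multiset F,
      ((m.map fun r => RatFunc.X - RatFunc.C r).prod)⁻¹ ∈ S := by
    intro m
    induction m using Multiset.induction with
    | empty => simpa using S.one_mem
    | cons r m ih =>
      rw [Multiset.map_cons, Multiset.prod_cons, mul_inv]
      exact mul_mem (hinv r) ih
  have hsurj : Function.Surjective φ := by
    intro z
    suffices hmem : z ∈ S by exact hmem
    have hd : z.denom ≠ 0 := z.denom_ne_zero
    have hsplit : (z.denom).Splits := IsAlgClosed.splits z.denom
    have hfac := Polynomial.Splits.eq_prod_roots hsplit
    have hz : z = algebraMap (Polynomial F) (RatFunc F) z.num *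
        (algebraMap (Polynomial F) (RatFunc F) z.denom)⁻¹ := by
      rw [← div_eq_mul_inv, RatFunc.num_div_denom]
    rw [hz]
    refine mul_mem (hpoly _) ?_
    rw [hfac, map_mul, mul_inv, RatFunc.algebraMap_C, map_multiset_prod, Multiset.map_map]
    have hmap : (z.denom.roots.map
        ((algebraMap (Polynomial F) (RatFunc F)) ∘ fun r => Polynomial.X - Polynomial.C r))
        = z.denom.roots.map fun r => RatFunc.X - RatFunc.C r := by
      refine Multiset.map_congr rfl fun r _ => ?_
      simp [RatFunc.algebraMap_X, RatFunc.algebraMap_C]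
    rw [hmap]
    refine mul_mem ?_ (hprodinv _)
    rw [← RatFunc.algebraMap_eq_C, ← map_inv₀]
    exact S.algebraMap_mem _
  refine ⟨hsurj, RingHom.ker_isMaximal_of_surjective _ hsurj, ?_⟩
  intro x hker
  have hp : (MvPolynomial.X j - MvPolynomial.C (x j)) ∈ RingHom.ker (MvPolynomial.eval x) := by
    simp [RingHom.mem_ker]
  rw [← hker, RingHom.mem_ker] at hp
  have : (RatFunc.X : RatFunc F) - RatFunc.C (x j) = 0 := by
    simpa [hφ, hv, RatFunc.algebraMap_eq_C] using hp
  have hXC : (RatFunc.X : RatFunc F) = RatFunc.C (x j) := by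
    rwa [sub_eq_zero] at this
  have := congrArg RatFunc.num hXC
  rw [RatFunc.num_X, RatFunc.num_C] at this
  exact Polynomial.X_ne_C (x j) this
end
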